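/- arXiv:math/0512249 — 12 statements merged into one kernel-verified Lean document; each statement's English description precedes it below -/
import Mathlib

section
/- For every n ≥ 1, the polynomial identity Q_n(x, y, z, t) = Q_n(x + n·z + n·t, y, −t, −z) holds, where the right-hand side denotes the result of substituting x + n·z + n·t for x, −t for z, and −z for t in Q_n. -/
open MvPolynomial

/-- The Chapoton polynomials `Q n`, defined by `Q 1 = 1` and
`Q (n+1) = [x + n z + (y + t)(n + y ∂_y)] Q n`, where the variables
`x, y, z, t` are `X 0, X 1, X 2, X 3` respectively. -/
noncomputable def ChapotonQ : ℕ → MvPolynomial (Fin 4) ℤ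
  | 0 => 1
  | 1 => 1
  | (n + 2) =>
      (X 0 + ((n : MvPolynomial (Fin 4) ℤ) + 1) * X 2) * ChapotonQ (n + 1) +
        (X 1 + X 3) * (((n : MvPolynomial (Fin 4) ℤ) + 1) * ChapotonQ (n + 1) +
          X 1 * pderiv 1 (ChapotonQ (n + 1)))

/-
Let `euler n = n + y ∂_y`, so that `Q (n+1) = step n (Q n)` with
`step n = x + n z + (y + t) euler n`. The substitutions `shift : x ↦ x + z + t` and `dual m` (the
one in the statement) fix `y` and commute with `∂_y`; moreover `dual (m+1) ∘ dual m = shift`,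
`shift` conjugates `step n` into `step n + z + t`, and `dual (n+1)` conjugates it into
`step n + (z + t) (1 - euler n)`.

The commutation relation `euler (n+1) (step n + z + t) = step (n+1) euler n + step n + z + t`
gives, by induction, `shift (Q (n+1)) = Q (n+1) + (z + t) euler n (shift (Q n))`. If
`dual n (Q n) = Q n`, then `dual (n+1) (Q n) = shift (Q n)`, hence
`dual (n+1) (Q (n+1)) = shift (Q (n+1)) - (z + t) euler n (shift (Q n)) = Q (n+1)`.
-/

theorem MvPolynomial.pderiv_aeval_of_pderiv_eq {σ R : Type*} [CommSemiring R]
    {f : σ → MvPolynomial σ R} {i : σ} (hf : ∀ j, pderiv i (f j) = pderiv i (X j))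
    (p : MvPolynomial σ R) : pderiv i (aeval f p) = aeval f (pderiv i p) := by
  classical
  induction p using MvPolynomial.induction_on with
  | C a => simp
  | add p q hp hq => simp only [map_add, hp, hq]
  | mul_X p j hp =>
    have hXj : aeval f (pderiv i (X j : MvPolynomial σ R)) = pderiv i (X j) := by
      by_cases h : j = i
      · simp [h]
      · simp [pderiv_X_of_ne h]
    simp only [map_mul, aeval_X, pderiv_mul, hp, map_add, hf j, hXj]

namespace ChapotonQ

variable {R : Type*} [CommRing R]

noncomputable def euler (n : ℕ) (p : MvPolynomial (Fin 4) R) : MvPolynomial (Fin 4) R :=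
  (n : MvPolynomial (Fin 4) R) * p + X 1 * pderiv 1 p

noncomputable def step (n : ℕ) (p : MvPolynomial (Fin 4) R) : MvPolynomial (Fin 4) R :=
  (X 0 + (n : MvPolynomial (Fin 4) R) * X 2) * p + (X 1 + X 3) * euler n p

noncomputable def shift : MvPolynomial (Fin 4) R →ₐ[R] MvPolynomial (Fin 4) R :=
  aeval ![X 0 + X 2 + X 3, X 1, X 2, X 3]

noncomputable def dual (m : ℕ) : MvPolynomial (Fin 4) R →ₐ[R] MvPolynomial (Fin 4) R :=
  aeval ![X 0 + (m : MvPolynomial (Fin 4) R) * X 2 + (m : MvPolynomial (Fin 4) R) * X 3,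
    X 1, -X 3, -X 2]

theorem euler_add (n : ℕ) (p q : MvPolynomial (Fin 4) R) :
    euler n (p + q) = euler n p + euler n q := by
  simp only [euler, map_add]; ring

theorem euler_mul_of_pderiv_eq_zero (n : ℕ) {c : MvPolynomial (Fin 4) R} (hc : pderiv 1 c = 0)
    (p : MvPolynomial (Fin 4) R) : euler n (c * p) = c * euler n p := by
  simp only [euler, pderiv_mul, hc]; ring

theorem step_add (n : ℕ) (p q : MvPolynomial (Fin 4) R) :
    step n (p + q) = step n p + step n q := by
  simp only [step, euler_add]; ring

theorem step_mul_of_pderiv_eq_zero (n : ℕ) {c : MvPolynomial (Fin 4) R} (hc : pderiv 1 c = 0)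
    (p : MvPolynomial (Fin 4) R) : step n (c * p) = c * step n p := by
  simp only [step, euler_mul_of_pderiv_eq_zero n hc]; ring

theorem euler_succ_step_add (n : ℕ) (p : MvPolynomial (Fin 4) R) :
    euler (n + 1) (step n p + (X 2 + X 3) * p) =
      step (n + 1) (euler n p) + (step n p + (X 2 + X 3) * p) := by
  simp only [step, euler, map_add, pderiv_mul, Derivation.map_natCast, pderiv_X_self,
    pderiv_X_of_ne (show (0 : Fin 4) ≠ 1 by decide),
    pderiv_X_of_ne (show (2 : Fin 4) ≠ 1 by decide),
    pderiv_X_of_ne (show (3 : Fin 4) ≠ 1 by decide)]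
  push_cast
  ring

section Substitution

variable {f : Fin 4 → MvPolynomial (Fin 4) R} (hf1 : f 1 = X 1)
  (hf : ∀ j, pderiv 1 (f j) = pderiv 1 (X j))
include hf1 hf

theorem aeval_euler (n : ℕ) (p : MvPolynomial (Fin 4) R) :
    aeval f (euler n p) = euler n (aeval f p) := by
  simp only [euler, map_add, map_mul, map_natCast, aeval_X, hf1, pderiv_aeval_of_pderiv_eq hf]

theorem aeval_step (n : ℕ) (p : MvPolynomial (Fin 4) R) :
    aeval f (step n p) =
      (f 0 + (n : MvPolynomial (Fin 4) R) * f 2) * aeval f p +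
        (X 1 + f 3) * euler n (aeval f p) := by
  simp only [step, map_add, map_mul, map_natCast, aeval_X, hf1, aeval_euler hf1 hf]

end Substitution

theorem shift_step (n : ℕ) (p : MvPolynomial (Fin 4) R) :
    shift (step n p) = step n (shift p) + (X 2 + X 3) * shift p := by
  rw [shift, aeval_step ?_ ?_]
  · simp only [step, Matrix.cons_val_zero, Matrix.cons_val]
    ring
  · rfl
  · intro j; fin_cases j <;> simp

theorem dual_succ_step (n : ℕ) (p : MvPolynomial (Fin 4) R) :
    dual (n + 1) (step n p) =
      step n (dual (n + 1) p) + (X 2 + X 3) * (dual (n + 1) p - euler n (dual (n + 1) p)) := by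
  rw [dual, aeval_step ?_ ?_]
  · simp only [step, Matrix.cons_val_zero, Matrix.cons_val]
    push_cast
    ring
  · rfl
  · intro j; fin_cases j <;> simp

theorem dual_succ_comp_dual (m : ℕ) :
    (dual (m + 1)).comp (dual m) = (shift : MvPolynomial (Fin 4) R →ₐ[R] _) := by
  refine algHom_ext fun i => ?_
  fin_cases i <;>
    simp only [dual, shift, AlgHom.comp_apply, aeval_X, map_add, map_mul, map_natCast, map_neg,
      Matrix.cons_val, neg_neg, Fin.isValue, Fin.reduceFinMk, Fin.zero_eta, Fin.mk_one]
  push_cast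
  ring

theorem chapotonQ_succ {n : ℕ} (hn : 1 ≤ n) : ChapotonQ (n + 1) = step n (ChapotonQ n) := by
  obtain ⟨m, rfl⟩ := Nat.exists_eq_add_of_le' hn
  rw [ChapotonQ, step, euler]
  push_cast
  ring

theorem shift_chapotonQ_succ {n : ℕ} (hn : 1 ≤ n) :
    shift (ChapotonQ (n + 1)) =
      ChapotonQ (n + 1) + (X 2 + X 3) * euler n (shift (ChapotonQ n)) := by
  induction n, hn using Nat.le_induction with
  | base =>
    rw [chapotonQ_succ le_rfl, shift_step]
    simp [ChapotonQ, euler]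
  | succ n hn ih =>
    have hq := congrArg shift (chapotonQ_succ hn)
    rw [shift_step] at hq
    set p := shift (ChapotonQ n)
    set q := shift (ChapotonQ (n + 1))
    have hzt : pderiv 1 (X 2 + X 3 : MvPolynomial (Fin 4) ℤ) = 0 := by simp
    have hstep : step (n + 1) q =
        step (n + 1) (ChapotonQ (n + 1)) + (X 2 + X 3) * step (n + 1) (euler n p) := by
      rw [ih, step_add, step_mul_of_pderiv_eq_zero _ hzt]
    have heuler := euler_succ_step_add n p
    rw [← hq] at heuler
    rw [chapotonQ_succ (by omega : 1 ≤ n + 1), shift_step, heuler]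
    linear_combination hstep

theorem dual_chapotonQ {n : ℕ} (hn : 1 ≤ n) : dual n (ChapotonQ n) = ChapotonQ n := by
  induction n, hn using Nat.le_induction with
  | base => simp [ChapotonQ]
  | succ n hn ih =>
    have hshift : dual (n + 1) (ChapotonQ n) = shift (ChapotonQ n) := by
      conv_lhs => rw [← ih, ← AlgHom.comp_apply, dual_succ_comp_dual]
    have key := shift_chapotonQ_succ hn
    rw [chapotonQ_succ hn, shift_step] at key
    rw [chapotonQ_succ hn, dual_succ_step, hshift]
    linear_combination key

end ChapotonQ

/-- Duality formula: `Q_n(x,y,z,t) = Q_n(x + n z + n t, y, -t, -z)`. -/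
theorem chapotonQ_duality (n : ℕ) (hn : 1 ≤ n) :
    ChapotonQ n =
      aeval ![X 0 + (n : MvPolynomial (Fin 4) ℤ) * X 2 + (n : MvPolynomial (Fin 4) ℤ) * X 3,
        X 1, -X 3, -X 2] (ChapotonQ n) :=
  (ChapotonQ.dual_chapotonQ hn).symm
end

section
/- For every n ≥ 1, substituting y = 0 in Q_n gives Q_n(x, 0, z, t) = ∏_{k=1}^{n−1} (x + k·z + k·t). -/
open MvPolynomial

/-- The term `y ∂_y Q` of the recursion vanishes at `y = 0`. -/
theorem aeval_y_eq_zero_chapotonQ_succ_succ (n : ℕ) :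
    aeval ![X 0, 0, X 2, X 3] (ChapotonQ (n + 2)) =
      aeval ![X 0, 0, X 2, X 3] (ChapotonQ (n + 1)) *
        (X 0 + ((n + 1 : ℕ) : MvPolynomial (Fin 4) ℤ) * X 2 +
          ((n + 1 : ℕ) : MvPolynomial (Fin 4) ℤ) * X 3) := by
  rw [ChapotonQ]
  simp only [map_add, map_mul, map_natCast, map_one, aeval_X, Matrix.cons_val_zero,
    Matrix.cons_val_one, Matrix.cons_val_two, Matrix.cons_val_three, Matrix.head_cons,
    Matrix.tail_cons, zero_mul, add_zero, zero_add]
  push_cast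
  ring

theorem chapotonQ_y_eq_zero_general (n : ℕ) :
    aeval ![X 0, 0, X 2, X 3] (ChapotonQ n) =
      ∏ k ∈ Finset.Icc 1 (n - 1),
        (X 0 + (k : MvPolynomial (Fin 4) ℤ) * X 2 + (k : MvPolynomial (Fin 4) ℤ) * X 3) := by
  induction n with
  | zero => simp [ChapotonQ]
  | succ m ih =>
    cases m with
    | zero => simp [ChapotonQ]
    | succ k =>
      rw [aeval_y_eq_zero_chapotonQ_succ_succ, ih, Nat.add_sub_cancel, Nat.add_sub_cancel,
        Finset.prod_Icc_succ_top (Nat.le_add_left 1 k)]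

/-- Substituting `y = 0` gives `Q_n(x,0,z,t) = ∏_{k=1}^{n-1} (x + k z + k t)`. -/
theorem chapotonQ_y_eq_zero (n : ℕ) (hn : 1 ≤ n) :
    aeval ![X 0, 0, X 2, X 3] (ChapotonQ n) =
      ∏ k ∈ Finset.Icc 1 (n - 1),
        (X 0 + (k : MvPolynomial (Fin 4) ℤ) * X 2 + (k : MvPolynomial (Fin 4) ℤ) * X 3) :=
  chapotonQ_y_eq_zero_general n
end

section
/- For every n ≥ 1, the evaluation Q_n(1, 1, 1, 1) equals n! · C_n, where C_n = (1/(n+1))·binomial(2n, n) is the n-th Catalan number. -/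
open MvPolynomial

noncomputable def chapDy (j : ℕ) (p : MvPolynomial (Fin 4) ℤ) : MvPolynomial (Fin 4) ℤ :=
  (fun q => pderiv (1 : Fin 4) q)^[j] p
lemma chapDy_zero (p : MvPolynomial (Fin 4) ℤ) : chapDy 0 p = p := rfl
lemma chapDy_succ (j : ℕ) (p : MvPolynomial (Fin 4) ℤ) :
    chapDy (j + 1) p = chapDy j (pderiv 1 p) := Function.iterate_succ_apply _ _ _
lemma chapDy_succ' (j : ℕ) (p : MvPolynomial (Fin 4) ℤ) :
    chapDy (j + 1) p = pderiv 1 (chapDy j p) := Function.iterate_succ_apply' _ _ _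
lemma pderiv_natCast_mul (k : ℕ) (x : MvPolynomial (Fin 4) ℤ) :
    pderiv (1 : Fin 4) ((k : MvPolynomial (Fin 4) ℤ) * x)
      = (k : MvPolynomial (Fin 4) ℤ) * pderiv (1 : Fin 4) x := by
  rw [← map_natCast (C : ℤ →+* MvPolynomial (Fin 4) ℤ) k, pderiv_C_mul]

lemma chapDy_lin (f g p : MvPolynomial (Fin 4) ℤ) (hf : pderiv 1 f = g)
    (hg : pderiv 1 g = 0) (j : ℕ) :
    chapDy j (f * p) = f * chapDy j p
      + (j : MvPolynomial (Fin 4) ℤ) * (g * chapDy (j - 1) p) := by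
  induction j with
  | zero => simp [chapDy_zero]
  | succ k ih =>
    rw [chapDy_succ', ih, map_add, pderiv_mul, hf, pderiv_natCast_mul, pderiv_mul, hg,
      zero_mul, zero_add, ← chapDy_succ']
    cases k with
    | zero =>
      simp only [chapDy_zero, Nat.cast_zero, zero_mul, mul_zero, add_zero, Nat.cast_one,
        Nat.sub_self, one_mul]
      ring
    | succ l =>
      rw [Nat.succ_sub_one, ← chapDy_succ', show (l + 1 + 1) - 1 = l + 1 from rfl]
      push_cast
      ring

lemma chapDy_quad (f g h p : MvPolynomial (Fin 4) ℤ) (hf : pderiv 1 f = g)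
    (hg : pderiv 1 g = h) (hh : pderiv 1 h = 0) (j : ℕ) :
    chapDy j (f * p) = f * chapDy j p
      + (j : MvPolynomial (Fin 4) ℤ) * (g * chapDy (j - 1) p)
      + ((j.choose 2 : ℕ) : MvPolynomial (Fin 4) ℤ) * (h * chapDy (j - 2) p) := by
  induction j with
  | zero => simp [chapDy_zero]
  | succ k ih =>
    rw [chapDy_succ', ih, map_add, map_add, pderiv_mul, hf, pderiv_natCast_mul, pderiv_mul, hg,
      pderiv_natCast_mul, pderiv_mul, hh, zero_mul, zero_add, ← chapDy_succ']
    cases k with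
    | zero =>
      simp only [chapDy_zero, Nat.cast_zero, zero_mul, mul_zero, add_zero, Nat.cast_one,
        Nat.sub_self, one_mul, Nat.choose]
      norm_num
      ring
    | succ l =>
      rw [Nat.succ_sub_one, ← chapDy_succ']
      cases l with
      | zero =>
        norm_num [chapDy_zero, Nat.choose]
        ring
      | succ i =>
        rw [show (i + 1 + 1) - 2 = i from rfl, ← chapDy_succ' i,
          show i + 1 + 1 + 1 = i + 3 from rfl, show i + 1 + 1 = i + 2 from rfl,
          show (i + 3).choose 2 = (i + 2).choose 2 + (i + 2) by
            rw [Nat.choose_succ_succ, Nat.choose_one_right, Nat.add_comm]]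
        push_cast
        ring

lemma chapDy_add (j : ℕ) (p q : MvPolynomial (Fin 4) ℤ) :
    chapDy j (p + q) = chapDy j p + chapDy j q := by
  induction j generalizing p q with
  | zero => rfl
  | succ k ih => rw [chapDy_succ, chapDy_succ, chapDy_succ, map_add, ih]

noncomputable def chapB (n j : ℕ) : ℤ :=
  eval (fun _ => (1 : ℤ)) (chapDy j (ChapotonQ n))

lemma chapoton_decomp (m : ℕ) : ChapotonQ (m + 2) =
    (X 0 + C ((m : ℤ) + 1) * (X 1 + X 2 + X 3)) * ChapotonQ (m + 1)
      + (X 1 * X 1 + X 1 * X 3) * pderiv 1 (ChapotonQ (m + 1)) := by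
  have hc : ((m : MvPolynomial (Fin 4) ℤ)) = C ((m : ℤ)) :=
    (map_natCast (C : ℤ →+* MvPolynomial (Fin 4) ℤ) m).symm
  have hc2 : (C ((m : ℤ) + 1) : MvPolynomial (Fin 4) ℤ) = C ((m : ℤ)) + 1 := by
    rw [map_add, map_one]
  rw [ChapotonQ, hc, hc2]
  ring

lemma chapB_rec (m j : ℕ) :
    chapB (m + 2) j = (3 * (m : ℤ) + 4 + 3 * (j : ℤ)) * chapB (m + 1) j
      + (j : ℤ) * ((m : ℤ) + (j : ℤ)) * chapB (m + 1) (j - 1)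
      + 2 * chapB (m + 1) (j + 1) := by
  have hf1 : pderiv 1 ((X 0 : MvPolynomial (Fin 4) ℤ) + C ((m : ℤ) + 1) * (X 1 + X 2 + X 3))
      = C ((m : ℤ) + 1) := by simp
  have hg1 : pderiv 1 ((C ((m : ℤ) + 1)) : MvPolynomial (Fin 4) ℤ) = 0 := pderiv_C
  have hf2 : pderiv 1 ((X 1 : MvPolynomial (Fin 4) ℤ) * X 1 + X 1 * X 3)
      = C 2 * X 1 + X 3 := by
    simp [pderiv_mul]
    ring
  have hg2 : pderiv 1 ((C 2 : MvPolynomial (Fin 4) ℤ) * X 1 + X 3) = C 2 := by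
    rw [map_add, pderiv_C_mul, pderiv_X_self, mul_one, pderiv_X_of_ne (by decide), add_zero]
  have hh2 : pderiv 1 ((C 2) : MvPolynomial (Fin 4) ℤ) = 0 := pderiv_C
  have key : ∀ a : ℕ, chapDy a (ChapotonQ (m + 2)) =
      ((X 0 : MvPolynomial (Fin 4) ℤ) + C ((m : ℤ) + 1) * (X 1 + X 2 + X 3))
          * chapDy a (ChapotonQ (m + 1))
        + (a : MvPolynomial (Fin 4) ℤ)
            * (C ((m : ℤ) + 1) * chapDy (a - 1) (ChapotonQ (m + 1)))
        + (((X 1 : MvPolynomial (Fin 4) ℤ) * X 1 + X 1 * X 3)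
            * chapDy a (pderiv 1 (ChapotonQ (m + 1)))
          + (a : MvPolynomial (Fin 4) ℤ)
              * ((C 2 * X 1 + X 3) * chapDy (a - 1) (pderiv 1 (ChapotonQ (m + 1))))
          + ((a.choose 2 : ℕ) : MvPolynomial (Fin 4) ℤ)
              * (C 2 * chapDy (a - 2) (pderiv 1 (ChapotonQ (m + 1))))) := by
    intro a
    rw [chapoton_decomp, chapDy_add, chapDy_lin _ _ _ hf1 hg1, chapDy_quad _ _ _ _ hf2 hg2 hh2]
  cases j with
  | zero =>
    have h0 : chapDy 0 (pderiv 1 (ChapotonQ (m + 1))) = chapDy 1 (ChapotonQ (m + 1)) := rfl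
    simp only [chapB, key 0, h0, Nat.cast_zero, zero_mul, mul_zero, add_zero, zero_add,
      Nat.choose, map_add, map_mul, eval_X, eval_C, map_natCast, chapDy_zero]
    push_cast
    ring
  | succ k =>
    cases k with
    | zero =>
      have h0 : chapDy 0 (pderiv 1 (ChapotonQ (m + 1))) = chapDy 1 (ChapotonQ (m + 1)) := rfl
      have h1 : chapDy 1 (pderiv 1 (ChapotonQ (m + 1))) = chapDy 2 (ChapotonQ (m + 1)) :=
        (chapDy_succ 1 _).symm
      simp only [chapB, key 1, h0, h1, Nat.sub_self, Nat.choose, Nat.cast_zero, Nat.cast_one,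
        zero_mul, mul_zero, add_zero, zero_add, one_mul, map_add, map_mul, eval_X, eval_C,
        map_natCast, chapDy_zero]
      norm_num
      ring
    | succ l =>
      have hA : (l + 2) - 1 = l + 1 := rfl
      have hB : (l + 2) - 2 = l := rfl
      have hs0 : chapDy (l + 2) (pderiv 1 (ChapotonQ (m + 1)))
          = chapDy (l + 3) (ChapotonQ (m + 1)) := (chapDy_succ (l + 2) _).symm
      have hs1 : chapDy (l + 1) (pderiv 1 (ChapotonQ (m + 1)))
          = chapDy (l + 2) (ChapotonQ (m + 1)) := (chapDy_succ (l + 1) _).symm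
      have hs2 : chapDy l (pderiv 1 (ChapotonQ (m + 1)))
          = chapDy (l + 1) (ChapotonQ (m + 1)) := (chapDy_succ l _).symm
      have he : Even ((l + 2) * (l + 1)) := by
        rw [mul_comm]; exact Nat.even_mul_succ_self (l + 1)
      have hch : 2 * ((l + 2).choose 2) = (l + 2) * (l + 1) := by
        rw [Nat.choose_two_right, show (l + 2) - 1 = l + 1 from rfl,
          Nat.mul_div_cancel' he.two_dvd]
      simp only [chapB, key (l + 2), hA, hB, hs0, hs1, hs2, map_add, map_mul, eval_X, eval_C,
        map_natCast]
      have hchZ : 2 * ((((l + 2).choose 2 : ℕ)) : ℤ) = ((l : ℤ) + 2) * ((l : ℤ) + 1) := by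
        exact_mod_cast hch
      push_cast
      push_cast at hchZ
      linear_combination (eval (fun _ => (1 : ℤ)) (chapDy (l + 1) (ChapotonQ (m + 1)))) * hchZ

lemma chapDy_zero_poly (j : ℕ) : chapDy j (0 : MvPolynomial (Fin 4) ℤ) = 0 := by
  induction j with
  | zero => rfl
  | succ k ih => rw [chapDy_succ', ih, map_zero]

lemma cat_step (k : ℕ) :
    (k + 2) * ((k + 1).factorial * catalan (k + 1))
      = 2 * (2 * k + 1) * (k + 1) * (k.factorial * catalan k) := by
  have h1 := succ_mul_catalan_eq_centralBinom k
  have h2 := succ_mul_catalan_eq_centralBinom (k + 1)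
  have h3 := Nat.succ_mul_centralBinom_succ k
  rw [Nat.factorial_succ]
  zify at h1 h2 h3 ⊢
  linear_combination ((k : ℤ) + 1) * (k.factorial : ℤ) * h2 + (k.factorial : ℤ) * h3
    - 2 * (2 * (k : ℤ) + 1) * (k.factorial : ℤ) * h1

lemma chapKey : ∀ n : ℕ, 1 ≤ n →
    chapB n 0 = (n.factorial : ℤ) * (catalan n : ℤ) ∧
    ∀ j : ℕ, (2 * ((n : ℚ) + (j : ℚ) + 2)) * ((chapB n (j + 1) : ℤ) : ℚ)
      = ((n : ℚ) + (j : ℚ)) * ((n : ℚ) - 1 - (j : ℚ)) * ((chapB n j : ℤ) : ℚ) := by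
  intro n hn
  induction n, hn using Nat.le_induction with
  | base =>
    have hQ : ChapotonQ 1 = 1 := rfl
    have hB0 : chapB 1 0 = 1 := by simp [chapB, chapDy_zero, hQ]
    have hBs : ∀ j, chapB 1 (j + 1) = 0 := by
      intro j
      have h : chapDy (j + 1) (ChapotonQ 1) = 0 := by
        rw [hQ, chapDy_succ, pderiv_one, chapDy_zero_poly]
      simp [chapB, h]
    refine ⟨by simp [hB0, catalan_one], fun j => ?_⟩
    cases j with
    | zero => simp [hBs, hB0]
    | succ l => simp [hBs]
  | succ n hn ih =>
    obtain ⟨m, rfl⟩ : ∃ m, n = m + 1 := ⟨n - 1, by omega⟩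
    obtain ⟨ihv, ihr⟩ := ih
    simp only [show m + 1 + 1 = m + 2 from rfl]
    have h0Q := congrArg (fun z : ℤ => (z : ℚ)) (chapB_rec m 0)
    have h1Q := congrArg (fun z : ℤ => (z : ℚ)) (chapB_rec m 1)
    norm_num at h0Q h1Q
    constructor
    · -- value
      have ihvQ : ((chapB (m + 1) 0 : ℤ) : ℚ)
          = ((m + 1).factorial : ℚ) * (catalan (m + 1) : ℚ) := by exact_mod_cast ihv
      have e1Q := ihr 0
      push_cast at e1Q
      have hcatQ : ((m : ℚ) + 3) * (((m + 2).factorial : ℚ) * (catalan (m + 2) : ℚ))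
          = 2 * (2 * (m : ℚ) + 3) * ((m : ℚ) + 2)
            * (((m + 1).factorial : ℚ) * (catalan (m + 1) : ℚ)) := by
        have := cat_step (m + 1)
        exact_mod_cast this
      have hvQ : ((chapB (m + 2) 0 : ℤ) : ℚ)
          = ((m + 2).factorial : ℚ) * (catalan (m + 2) : ℚ) := by
        have hne : ((m : ℚ) + 3) ≠ 0 := by positivity
        apply mul_left_cancel₀ hne
        linear_combination ((m : ℚ) + 3) * h0Q + e1Q - hcatQ
          + (2 * (2 * (m : ℚ) + 3) * ((m : ℚ) + 2)) * ihvQ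
      exact_mod_cast hvQ
    · -- ratio
      intro j
      cases j with
      | zero =>
        have e1 := ihr 0
        have e2 := ihr 1
        push_cast at e1 e2 ⊢
        linear_combination 2 * ((m : ℚ) + 4) * h1Q - ((m : ℚ) + 2) * ((m : ℚ) + 1) * h0Q
          + (3 * (m : ℚ) + 8) * e1 + 2 * e2
      | succ k =>
        have hrec1Q := congrArg (fun z : ℤ => (z : ℚ)) (chapB_rec m (k + 1))
        have hrec2Q := congrArg (fun z : ℤ => (z : ℚ)) (chapB_rec m (k + 2))
        simp only [show (k + 1) - 1 = k from rfl, show (k + 2) - 1 = k + 1 from rfl] at hrec1Q hrec2Q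
        push_cast at hrec1Q hrec2Q
        have e1 := ihr k
        have e2 := ihr (k + 1)
        have e3 := ihr (k + 2)
        push_cast at e1 e2 e3 ⊢
        linear_combination 2 * ((m : ℚ) + (k : ℚ) + 5) * hrec2Q
          - ((m : ℚ) + (k : ℚ) + 3) * ((m : ℚ) - (k : ℚ)) * hrec1Q
          + ((k : ℚ) + 1) * ((m : ℚ) + (k : ℚ) + 3) * e1
          + (3 * (m : ℚ) + 3 * (k : ℚ) + 11) * e2 + 2 * e3

/-- `Q_n(1,1,1,1) = n! C_n`, where `C_n = (2n choose n)/(n+1)` is the n-th Catalan number. -/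
theorem chapotonQ_eval_one (n : ℕ) (hn : 1 ≤ n) :
    eval (fun _ => (1 : ℤ)) (ChapotonQ n) = (n.factorial : ℤ) * (catalan n : ℤ) ∧
      (n + 1) * catalan n = (2 * n).choose n := by
  constructor
  · have h := (chapKey n hn).1
    simpa [chapB, chapDy_zero] using h
  · rw [← Nat.centralBinom_eq_two_mul_choose]
    exact succ_mul_catalan_eq_centralBinom n
end

section
/- For every n ≥ 1 and every integer k, the coefficient of y^k in the polynomial Q_n(x, y, 1, t) (regarded as a polynomial in y with coefficients that are polynomials in x and t) equals Q_{n,k}(x, t). -/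
open MvPolynomial

/-- The polynomials `Q_{n,k}(x,t)`, with variables `x = X 0`, `t = X 1`, defined by
`Q_{1,0} = 1`, `Q_{n,k} = 0` for `k < 0` or `k ≥ n`, and for `n ≥ 2`
`Q_{n,k} = (x + n - 1 + t (n + k - 1)) Q_{n-1,k} + (n + k - 2) Q_{n-1,k-1}`. -/
noncomputable def ChapotonQk : ℕ → ℤ → MvPolynomial (Fin 2) ℤ
  | 0, _ => 0
  | 1, k => if k = 0 then 1 else 0
  | (n + 2), k =>
      (X 0 + C ((n : ℤ) + 1) + X 1 * C ((n : ℤ) + 1 + k)) * ChapotonQk (n + 1) k +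
        C ((n : ℤ) + k) * ChapotonQk (n + 1) (k - 1)

/-- `Q_n(x,y,1,t)` regarded as a polynomial in `y` over polynomials in `x,t`. -/
noncomputable def chapotonQInY (n : ℕ) : Polynomial (MvPolynomial (Fin 2) ℤ) :=
  aeval ![Polynomial.C (X 0), Polynomial.X, 1, Polynomial.C (X 1)] (ChapotonQ n)

noncomputable def ChapV : Fin 4 → Polynomial (MvPolynomial (Fin 2) ℤ) :=
  ![Polynomial.C (X 0), Polynomial.X, 1, Polynomial.C (X 1)]

lemma chap_deriv_aeval (p : MvPolynomial (Fin 4) ℤ) :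
    Polynomial.derivative (aeval ChapV p) = aeval ChapV (pderiv 1 p) := by
  induction p using MvPolynomial.induction_on with
  | C a => simp
  | add p q hp hq => simp [hp, hq]
  | mul_X p i hp =>
    rw [map_mul, Polynomial.derivative_mul, hp, pderiv_mul, map_add, map_mul]
    congr 1
    fin_cases i <;> simp [ChapV, pderiv_X, Pi.single_apply]

lemma chapotonQInY_eq (n : ℕ) : chapotonQInY n = aeval ChapV (ChapotonQ n) := rfl

lemma chap_rec (n : ℕ) :
    chapotonQInY (n + 2) =
      (Polynomial.C (X 0) + Polynomial.C ((n : MvPolynomial (Fin 2) ℤ) + 1)) * chapotonQInY (n + 1) +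
      (Polynomial.X + Polynomial.C (X 1)) *
        (Polynomial.C ((n : MvPolynomial (Fin 2) ℤ) + 1) * chapotonQInY (n + 1) +
          Polynomial.X * Polynomial.derivative (chapotonQInY (n + 1))) := by
  rw [chapotonQInY_eq, chapotonQInY_eq, ChapotonQ]
  simp only [map_add, map_mul, map_natCast, map_one, aeval_X, ← chap_deriv_aeval]
  simp [ChapV]

lemma chap_xd_coeff (p : Polynomial (MvPolynomial (Fin 2) ℤ)) (j : ℕ) :
    (Polynomial.X * Polynomial.derivative p).coeff j = (j : MvPolynomial (Fin 2) ℤ) * p.coeff j := by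
  cases j with
  | zero => simp [Polynomial.mul_coeff_zero]
  | succ j => rw [Polynomial.coeff_X_mul, Polynomial.coeff_derivative]; push_cast; ring

lemma chap_aux (n : ℕ) : ∀ k : ℤ,
    (if 0 ≤ k then (chapotonQInY (n + 1)).coeff k.toNat else 0) = ChapotonQk (n + 1) k := by
  induction n with
  | zero =>
    intro k
    have h1 : chapotonQInY 1 = 1 := by simp [chapotonQInY, ChapotonQ]
    rw [h1, show (0:ℕ)+1 = 1 from rfl, ChapotonQk, Polynomial.coeff_one]
    by_cases hk : 0 ≤ k
    · rcases eq_or_ne k 0 with rfl | h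
      · simp
      · rw [if_pos hk, if_neg h, if_neg (by omega)]
    · rw [if_neg hk, if_neg (by omega)]
  | succ n ih =>
    intro k
    rw [show n + 1 + 1 = n + 2 from rfl, ChapotonQk]
    by_cases hk : 0 ≤ k
    · obtain ⟨m, rfl⟩ : ∃ m : ℕ, k = m := ⟨k.toNat, (Int.toNat_of_nonneg hk).symm⟩
      rw [if_pos hk, Int.toNat_natCast, chap_rec]
      have h1 := ih (m : ℤ)
      rw [if_pos hk, Int.toNat_natCast] at h1
      cases m with
      | zero =>
        have h2 := ih (-1)
        rw [if_neg (by omega)] at h2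
        push_cast at h1 ⊢
        simp only [Polynomial.coeff_add, Polynomial.mul_coeff_zero, Polynomial.coeff_C,
          Polynomial.coeff_X_zero, chap_xd_coeff, if_pos rfl]
        rw [← h1, ← h2]
        simp only [map_add, map_one, map_natCast, map_zero]
        push_cast
        ring
      | succ m =>
        have h2 := ih (m : ℤ)
        rw [if_pos (by positivity), Int.toNat_natCast] at h2
        rw [show (((m+1:ℕ):ℤ) - 1) = (m:ℤ) by push_cast; ring]
        simp only [Polynomial.coeff_add, Polynomial.coeff_C_mul, add_mul,
          Polynomial.coeff_X_mul, chap_xd_coeff, Polynomial.coeff_derivative]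
        rw [← h1, ← h2]
        simp only [map_add, map_one, map_natCast, map_zero]
        push_cast
        ring
    · rw [if_neg hk]
      have h1 := ih k
      have h2 := ih (k - 1)
      rw [if_neg hk] at h1
      rw [if_neg (by omega)] at h2
      rw [← h1, ← h2]
      ring


/-- The coefficient of `y^k` in `Q_n(x,y,1,t)` is the polynomial `Q_{n,k}(x,t)`
(for `k < 0` this coefficient is `0`). -/
theorem chapotonQ_coeff_y (n : ℕ) (hn : 1 ≤ n) (k : ℤ) :
    (if 0 ≤ k then (chapotonQInY n).coeff k.toNat else 0) = ChapotonQk n k := by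
  obtain ⟨m, rfl⟩ : ∃ m, n = m + 1 := ⟨n - 1, by omega⟩
  exact chap_aux m k
end

section
/- For every n ≥ 1, the sum over all permutations π of {1, …, n} of t^{gdes(π)} equals ∏_{k=1}^{n−1} (1 + k·t) as a polynomial identity in t (for n = 1 the empty product equals 1). -/
/-!
Every permutation of `Fin (n + 1)` arises uniquely by inserting the largest value `n` at some
position `p` into a permutation `σ` of `Fin n`. The inserted entry is a general descent exactly
when it is not in the last position, and, being smaller than no entry, it changes the status
of no other position. So the `n + 1` insertion positions contribute the factor `1 + n t`.
-/

open Finset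

/-- The number of general descents of a permutation `π` of `{1,…,n}`:
positions `i` for which there exists a later position `j > i` with `π j < π i`. -/
def gdes {n : ℕ} (π : Equiv.Perm (Fin n)) : ℕ :=
  (Finset.univ.filter (fun i : Fin n => ∃ j : Fin n, i < j ∧ π j < π i)).card

/-- The permutation of `Fin (n + 1)` whose word is that of `σ` with the value `n` inserted at
position `p`. -/
def insertMax {n : ℕ} (σ : Equiv.Perm (Fin n)) (p : Fin (n + 1)) : Equiv.Perm (Fin (n + 1)) :=
  (finSuccEquiv' p).trans ((Equiv.optionCongr σ).trans (finSuccEquiv' (Fin.last n)).symm)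

section insertMax

variable {n : ℕ} (σ : Equiv.Perm (Fin n)) (p : Fin (n + 1))

@[simp]
lemma insertMax_apply_self : insertMax σ p p = Fin.last n := by
  simp [insertMax]

@[simp]
lemma insertMax_apply_succAbove (i : Fin n) :
    insertMax σ p (p.succAbove i) = (σ i).castSucc := by
  simp [insertMax, finSuccEquiv'_symm_some, Fin.succAbove_last]

lemma exists_insertMax_lt_insertMax_self_iff :
    (∃ j, p < j ∧ insertMax σ p j < insertMax σ p p) ↔ p ≠ Fin.last n := by
  refine ⟨?_, fun hp => ⟨Fin.last n, Fin.lt_last_iff_ne_last.mpr hp, ?_⟩⟩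
  · rintro ⟨j, hpj, -⟩ rfl
    exact (Fin.le_last j).not_gt hpj
  · rw [insertMax_apply_self, Fin.lt_last_iff_ne_last]
    exact fun h => hp.symm ((insertMax σ p).injective (h.trans (insertMax_apply_self σ p).symm))

lemma exists_insertMax_lt_insertMax_succAbove_iff (i : Fin n) :
    (∃ j, p.succAbove i < j ∧ insertMax σ p j < insertMax σ p (p.succAbove i)) ↔
      ∃ j, i < j ∧ σ j < σ i := by
  constructor
  · rintro ⟨j, hij, hlt⟩
    have hjp : j ≠ p := by
      rintro rfl
      exact (Fin.le_last _).not_gt (by simpa using hlt)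
    obtain ⟨j, rfl⟩ := Fin.exists_succAbove_eq hjp
    exact ⟨j, Fin.succAbove_lt_succAbove_iff.mp hij, by simpa using hlt⟩
  · rintro ⟨j, hij, hlt⟩
    exact ⟨p.succAbove j, Fin.succAbove_lt_succAbove_iff.mpr hij, by simpa using hlt⟩

lemma gdes_insertMax :
    gdes (insertMax σ p) = gdes σ + if p = Fin.last n then 0 else 1 := by
  simp only [gdes, card_filter]
  rw [Fin.sum_univ_succAbove _ p]
  simp only [exists_insertMax_lt_insertMax_self_iff, exists_insertMax_lt_insertMax_succAbove_iff,
    ite_not]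
  ring

end insertMax

lemma bijective_insertMax (n : ℕ) :
    Function.Bijective fun q : Equiv.Perm (Fin n) × Fin (n + 1) => insertMax q.1 q.2 := by
  refine (Fintype.bijective_iff_injective_and_card _).mpr ⟨?_, ?_⟩
  · rintro ⟨σ₁, p₁⟩ ⟨σ₂, p₂⟩ h
    dsimp only at h
    obtain rfl : p₁ = p₂ :=
      (insertMax σ₁ p₁).injective (by rw [insertMax_apply_self, h, insertMax_apply_self])
    refine Prod.ext (Equiv.ext fun i => Fin.castSucc_injective n ?_) rfl
    simpa using congr($h (p₁.succAbove i))
  · simp [Fintype.card_perm, Nat.factorial_succ, mul_comm]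

lemma sum_pow_ite_eq_last {R : Type*} [CommSemiring R] (n : ℕ) (x : R) :
    ∑ p : Fin (n + 1), x ^ (if p = Fin.last n then 0 else 1) = 1 + n * x := by
  simp [Fin.sum_univ_castSucc, Fin.castSucc_ne_last, add_comm]

theorem sum_pow_gdes_eq_prod_range {R : Type*} [CommSemiring R] (n : ℕ) (x : R) :
    ∑ π : Equiv.Perm (Fin n), x ^ gdes π = ∏ k ∈ range n, (1 + k * x) := by
  induction n with
  | zero => simp [gdes]
  | succ n ih =>
    calc ∑ π : Equiv.Perm (Fin (n + 1)), x ^ gdes π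
        = ∑ q : Equiv.Perm (Fin n) × Fin (n + 1), x ^ gdes (insertMax q.1 q.2) :=
          (Fintype.sum_bijective _ (bijective_insertMax n) _ _ fun _ => rfl).symm
      _ = ∑ σ : Equiv.Perm (Fin n), x ^ gdes σ * ∑ p : Fin (n + 1),
            x ^ (if p = Fin.last n then 0 else 1) := by
          simp only [Fintype.sum_prod_type, gdes_insertMax, pow_add, mul_sum]
      _ = ∏ k ∈ range (n + 1), (1 + k * x) := by
          rw [sum_pow_ite_eq_last, ← sum_mul, ih, prod_range_succ]

theorem sum_gdes_eq_prod_general (n : ℕ) :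
    ∑ π : Equiv.Perm (Fin n), (Polynomial.X : Polynomial ℤ) ^ gdes π =
      ∏ k ∈ Finset.Icc 1 (n - 1), (1 + (k : Polynomial ℤ) * Polynomial.X) := by
  rw [sum_pow_gdes_eq_prod_range]
  -- the factor for `k = 0` is `1`
  refine (prod_subset (fun k hk => ?_) fun k hk hk' => ?_).symm
  · simp only [mem_Icc, mem_range] at hk ⊢
    omega
  · obtain rfl : k = 0 := by simp only [mem_Icc, mem_range] at hk hk'; omega
    simp

/-- `∑_{π ∈ S_n} t^{gdes π} = (1 + t)(1 + 2t) ⋯ (1 + (n-1)t)` as polynomials in `t`. -/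
theorem sum_gdes_eq_prod (n : ℕ) (hn : 1 ≤ n) :
    ∑ π : Equiv.Perm (Fin n), (Polynomial.X : Polynomial ℤ) ^ gdes π =
      ∏ k ∈ Finset.Icc 1 (n - 1), (1 + (k : Polynomial ℤ) * Polynomial.X) :=
  sum_gdes_eq_prod_general n
end

section
/- For every n ≥ 1, the polynomial identity ∑_{k=0}^{n} binomial(n, k) · (∏_{i=0}^{k} (x + i·t)) · (∏_{j=0}^{n−k−1} (y + j·t)) = x · ∏_{k=1}^{n} (x + y + k·t) holds in the polynomial ring in the variables x, y, t (here ∏_{j=0}^{−1} denotes the empty product, equal to 1). -/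
/-!
Writing `(a | t)_k = ∏_{i<k} (a + i t)` for the rising factorial with increment `t`, the
left-hand side is `x` times `∑_k C(n,k) (x + t | t)_k (y | t)_{n-k}`, because
`(x | t)_{k+1} = x (x + t | t)_k`. By the Chu–Vandermonde identity for rising factorials this
sum is `(x + y + t | t)_n = ∏_{k=1}^n (x + y + k t)`. The Chu–Vandermonde identity itself follows
by induction on `n` from Pascal's rule, splitting the new factor `a + b + n t` of
`(a + b | t)_{n+1}` as `(a + i t) + (b + j t)` with `i + j = n`.
-/

open Finset MvPolynomial

section RisingFactorial

variable {R : Type*} [CommRing R]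

def risingFactorial (a t : R) (k : ℕ) : R :=
  ∏ i ∈ range k, (a + i * t)

theorem risingFactorial_succ (a t : R) (k : ℕ) :
    risingFactorial a t (k + 1) = risingFactorial a t k * (a + k * t) :=
  prod_range_succ _ k

theorem risingFactorial_succ' (a t : R) (k : ℕ) :
    risingFactorial a t (k + 1) = a * risingFactorial (a + t) t k := by
  rw [risingFactorial, prod_range_succ', Nat.cast_zero, zero_mul, add_zero, mul_comm]
  congr 1
  exact prod_congr rfl fun i _ => by push_cast; ring

theorem risingFactorial_add_eq_prod_Icc (a t : R) (n : ℕ) :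
    risingFactorial (a + t) t n = ∏ k ∈ Icc 1 n, (a + k * t) := by
  rw [← Ico_add_one_right_eq_Icc, prod_Ico_eq_prod_range, Nat.add_sub_cancel]
  exact prod_congr rfl fun i _ => by push_cast; ring

theorem risingFactorial_add (a b t : R) (n : ℕ) :
    risingFactorial (a + b) t n =
      ∑ ij ∈ antidiagonal n,
        (n.choose ij.1 : R) * (risingFactorial a t ij.1 * risingFactorial b t ij.2) := by
  induction n with
  | zero => simp [risingFactorial]
  | succ n ih =>
    rw [sum_antidiagonal_choose_succ_mul fun i j => risingFactorial a t i * risingFactorial b t j,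
      risingFactorial_succ, ih, sum_mul, ← sum_add_distrib]
    refine sum_congr rfl fun ij hij => ?_
    obtain rfl : ij.1 + ij.2 = n := mem_antidiagonal.mp hij
    rw [Nat.choose_symm_add, risingFactorial_succ, risingFactorial_succ]
    push_cast
    ring

theorem sum_choose_mul_risingFactorial_succ_mul (x y t : R) (n : ℕ) :
    ∑ k ∈ range (n + 1),
        (n.choose k : R) * risingFactorial x t (k + 1) * risingFactorial y t (n - k) =
      x * ∏ k ∈ Icc 1 n, (x + y + k * t) := by
  rw [← risingFactorial_add_eq_prod_Icc, add_right_comm, risingFactorial_add,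
    Nat.sum_antidiagonal_eq_sum_range_succ_mk, mul_sum]
  refine sum_congr rfl fun k _ => ?_
  rw [risingFactorial_succ']
  ring

end RisingFactorial

theorem chu_vandermonde_variant_general (n : ℕ) :
    ∑ k ∈ Finset.range (n + 1),
        (n.choose k : MvPolynomial (Fin 3) ℤ) *
          (∏ i ∈ Finset.range (k + 1), (X 0 + (i : MvPolynomial (Fin 3) ℤ) * X 2)) *
          (∏ j ∈ Finset.range (n - k), (X 1 + (j : MvPolynomial (Fin 3) ℤ) * X 2)) =
      X 0 * ∏ k ∈ Finset.Icc 1 n, (X 0 + X 1 + (k : MvPolynomial (Fin 3) ℤ) * X 2) :=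
  sum_choose_mul_risingFactorial_succ_mul (X 0) (X 1) (X 2) n

/-- A variant of the Chu–Vandermonde formula:
`∑_{k=0}^{n} C(n,k) ∏_{i=0}^{k}(x+it) ∏_{j=0}^{n-k-1}(y+jt) = x ∏_{k=1}^{n}(x+y+kt)`,
as polynomials in `x = X 0`, `y = X 1`, `t = X 2` over `ℤ`. -/
theorem chu_vandermonde_variant (n : ℕ) (hn : 1 ≤ n) :
    ∑ k ∈ Finset.range (n + 1),
        (n.choose k : MvPolynomial (Fin 3) ℤ) *
          (∏ i ∈ Finset.range (k + 1), (X 0 + (i : MvPolynomial (Fin 3) ℤ) * X 2)) *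
          (∏ j ∈ Finset.range (n - k), (X 1 + (j : MvPolynomial (Fin 3) ℤ) * X 2)) =
      X 0 * ∏ k ∈ Finset.Icc 1 n, (X 0 + X 1 + (k : MvPolynomial (Fin 3) ℤ) * X 2) :=
  chu_vandermonde_variant_general n
end

section
/- For every n ≥ 2 and every integer k, the identity Q_{n,k}(x, t) = (x − k + t + 1)·Q_{n−1,k}(x + t + 1, t) + (n + k − 2)·Q_{n−1,k−1}(x + t + 1, t) holds, where Q_{m,j}(x + t + 1, t) denotes the polynomial obtained from Q_{m,j}(x, t) by substituting x + t + 1 for x. -/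
set_option maxHeartbeats 1000000


open MvPolynomial

private lemma chapotonQk_rec (n : ℕ) (k : ℤ) :
    ChapotonQk (n + 2) k =
      (X 0 + C ((n : ℤ) + 1) + X 1 * C ((n : ℤ) + 1 + k)) * ChapotonQk (n + 1) k +
        C ((n : ℤ) + k) * ChapotonQk (n + 1) (k - 1) := by
  rw [ChapotonQk]

private lemma chapotonQk_one (k : ℤ) :
    ChapotonQk 1 k = if k = 0 then 1 else 0 := by
  rw [ChapotonQk]

private lemma chapoton_aux (m : ℕ) (k : ℤ) :
    ChapotonQk (m + 2) k =
      (X 0 - C k + X 1 + 1) * aeval ![X 0 + X 1 + 1, X 1] (ChapotonQk (m + 1) k) +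
        C (((m : ℤ) + 2) + k - 2) * aeval ![X 0 + X 1 + 1, X 1] (ChapotonQk (m + 1) (k - 1)) := by
  induction m generalizing k with
  | zero =>
      rw [chapotonQk_rec, chapotonQk_one, chapotonQk_one]
      rcases eq_or_ne k 0 with rfl | hk0
      · simp; try ring
      · rcases eq_or_ne k 1 with rfl | hk1
        · simp; try ring
        · have hk1' : k - 1 ≠ 0 := by omega
          simp [hk0, hk1']
  | succ m ih =>
      have h1 := chapotonQk_rec (m + 1) k
      push_cast at h1 ⊢
      rw [h1]
      conv_rhs => rw [chapotonQk_rec m k, chapotonQk_rec m (k - 1)]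
      rw [ih k, ih (k - 1)]
      simp only [map_add, map_mul, map_sub, map_one, map_intCast, aeval_X, aeval_C, algebraMap_int_eq,
        eq_intCast, Matrix.cons_val_zero, Matrix.cons_val_one, Matrix.head_cons]
      push_cast
      ring

/-- `Q_{n,k}(x,t) = (x - k + t + 1) Q_{n-1,k}(x+t+1,t) + (n + k - 2) Q_{n-1,k-1}(x+t+1,t)`. -/
theorem chapotonQk_dual_rec (n : ℕ) (hn : 2 ≤ n) (k : ℤ) :
    ChapotonQk n k =
      (X 0 - C k + X 1 + 1) * aeval ![X 0 + X 1 + 1, X 1] (ChapotonQk (n - 1) k) +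
        C ((n : ℤ) + k - 2) * aeval ![X 0 + X 1 + 1, X 1] (ChapotonQk (n - 1) (k - 1)) := by
  obtain ⟨m, rfl⟩ : ∃ m, n = m + 2 := ⟨n - 2, by omega⟩
  have := chapoton_aux m k
  simpa using this
end

section
/- For every n ≥ 2 and every integer k, the identity Q_{n,k}(x − t − 1, t) = (x − k)·Q_{n−1,k}(x, t) + (n + k − 2)·Q_{n−1,k−1}(x, t) holds, where Q_{n,k}(x − t − 1, t) denotes the polynomial obtained from Q_{n,k}(x, t) by substituting x − t − 1 for x. -/
open MvPolynomial

/-- `Q_{n,k}(x-t-1,t) = (x - k) Q_{n-1,k}(x,t) + (n + k - 2) Q_{n-1,k-1}(x,t)`. -/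
theorem chapotonQk_shift_rec (n : ℕ) (hn : 2 ≤ n) (k : ℤ) :
    aeval ![X 0 - X 1 - 1, X 1] (ChapotonQk n k) =
      (X 0 - C k) * ChapotonQk (n - 1) k +
        C ((n : ℤ) + k - 2) * ChapotonQk (n - 1) (k - 1) := by
  induction n, hn using Nat.le_induction generalizing k with
  | base =>
      simp only [ChapotonQk, Nat.cast_ofNat]
      by_cases hk : k = 0
      · subst hk
        simp [ChapotonQk, map_add, map_mul, map_sub, map_one, aeval_X, aeval_C]
        try ring
      · by_cases hk1 : k = 1
        · subst hk1
          simp [ChapotonQk, map_add, map_mul, map_sub, map_one, aeval_X, aeval_C]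
          try ring
        · have h1 : k - 1 ≠ 0 := by omega
          simp [ChapotonQk, hk, hk1, h1, sub_eq_zero]
  | succ n hn ih =>
      obtain ⟨m, rfl⟩ : ∃ m, n = m + 2 := ⟨n - 2, by omega⟩
      have e1 : ChapotonQk (m + 2 + 1) k =
          (X 0 + C (((m + 1 : ℕ) : ℤ) + 1) + X 1 * C (((m + 1 : ℕ) : ℤ) + 1 + k)) *
              ChapotonQk (m + 2) k +
            C (((m + 1 : ℕ) : ℤ) + k) * ChapotonQk (m + 2) (k - 1) := rfl
      rw [e1]
      simp only [map_add, map_mul, map_sub, map_one, aeval_X, aeval_C,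
        Matrix.cons_val_zero, Matrix.cons_val_one, Matrix.head_cons]
      rw [ih k, ih (k - 1)]
      have e2 : k - 1 - 1 = k - 2 := by ring
      rw [e2]
      simp only [Nat.add_sub_cancel, ChapotonQk]
      rw [e2]
      push_cast
      simp only [C_add, C_sub, C_1, map_intCast, map_natCast, map_ofNat,
        MvPolynomial.algebraMap_eq]
      ring
end

section
/- For every n ≥ 2 and every integer k with 0 ≤ k ≤ n − 1, the identity Q_{n,k}(x, t) − Q_{n,k}(x − t − 1, t) = (t + 1)·(n + k − 1)·Q_{n−1,k}(x, t) holds, where Q_{n,k}(x − t − 1, t) denotes the polynomial obtained from Q_{n,k}(x, t) by substituting x − t − 1 for x. -/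
open MvPolynomial

lemma chapotonQk_eq_zero : ∀ (n : ℕ) (k : ℤ), (k < 0 ∨ (n : ℤ) ≤ k) → ChapotonQk n k = 0 := by
  intro n
  induction n with
  | zero => intro k _; rfl
  | succ m ih =>
    intro k hk
    match m with
    | 0 =>
      show (if k = 0 then (1 : MvPolynomial (Fin 2) ℤ) else 0) = 0
      rw [if_neg (by omega)]
    | m' + 1 =>
      show ChapotonQk (m' + 2) k = 0
      rw [ChapotonQk, ih k (by push_cast at hk ⊢; omega), ih (k - 1) (by push_cast at hk ⊢; omega)]
      ring

lemma chapotonQk_diff_aux : ∀ n, 2 ≤ n → ∀ k : ℤ,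
    ChapotonQk n k - aeval ![X 0 - X 1 - 1, X 1] (ChapotonQk n k) =
      (X 1 + 1) * C ((n : ℤ) + k - 1) * ChapotonQk (n - 1) k := by
  intro n hn
  induction n, hn using Nat.le_induction with
  | base =>
    intro k
    rcases eq_or_ne k 0 with rfl | hk0
    · show ChapotonQk (0 + 2) 0 - _ = _
      simp [ChapotonQk]
      ring
    rcases eq_or_ne k 1 with rfl | hk1
    · show ChapotonQk (0 + 2) 1 - _ = _
      simp [ChapotonQk]
    · have h2 : ChapotonQk 2 k = 0 := chapotonQk_eq_zero 2 k (by omega)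
      have h1 : ChapotonQk 1 k = 0 := chapotonQk_eq_zero 1 k (by omega)
      show ChapotonQk 2 k - _ = _ * ChapotonQk 1 k
      rw [h2, h1]
      simp
  | succ n hn ih =>
    intro k
    obtain ⟨m, rfl⟩ : ∃ m, n = m + 2 := ⟨n - 2, by omega⟩
    have hQ : ChapotonQk (m + 3) k =
        (X 0 + C ((m : ℤ) + 2) + X 1 * C ((m : ℤ) + 2 + k)) * ChapotonQk (m + 2) k +
          C ((m : ℤ) + 1 + k) * ChapotonQk (m + 2) (k - 1) := by
      show ChapotonQk ((m + 1) + 2) k = _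
      rw [ChapotonQk]
      push_cast
      ring_nf
    have ih1 := ih k
    have ih2 := ih (k - 1)
    have hs1 : aeval ![X 0 - X 1 - 1, X 1] (ChapotonQk (m + 2) k) =
        ChapotonQk (m + 2) k - (X 1 + 1) * C ((m : ℤ) + 2 + k - 1) * ChapotonQk (m + 1) k := by
      push_cast at ih1; linear_combination -ih1
    have hs2 : aeval ![X 0 - X 1 - 1, X 1] (ChapotonQk (m + 2) (k - 1)) =
        ChapotonQk (m + 2) (k - 1) -
          (X 1 + 1) * C ((m : ℤ) + 2 + (k - 1) - 1) * ChapotonQk (m + 1) (k - 1) := by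
      push_cast at ih2; linear_combination -ih2
    have hrec : ChapotonQk (m + 2) k =
        (X 0 + C ((m : ℤ) + 1) + X 1 * C ((m : ℤ) + 1 + k)) * ChapotonQk (m + 1) k +
          C ((m : ℤ) + k) * ChapotonQk (m + 1) (k - 1) := by
      rw [ChapotonQk]
    rw [hQ]
    simp only [map_add, map_mul, map_sub, map_one, aeval_X, aeval_C, algebraMap_eq,
      Matrix.cons_val_zero, Matrix.cons_val_one, Matrix.head_cons]
    simp only [Nat.add_sub_cancel]
    rw [hs1, hs2, hrec]
    simp only [algebraMap_eq, map_add, map_sub, map_one, map_ofNat,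
      Nat.cast_add, Nat.cast_ofNat, Nat.cast_one]
    push_cast
    ring

/-- `Q_{n,k}(x,t) - Q_{n,k}(x-t-1,t) = (t+1)(n+k-1) Q_{n-1,k}(x,t)`. -/
theorem chapotonQk_difference (n : ℕ) (hn : 2 ≤ n) (k : ℤ) (hk0 : 0 ≤ k)
    (hkn : k ≤ (n : ℤ) - 1) :
    ChapotonQk n k - aeval ![X 0 - X 1 - 1, X 1] (ChapotonQk n k) =
      (X 1 + 1) * C ((n : ℤ) + k - 1) * ChapotonQk (n - 1) k :=
  chapotonQk_diff_aux n hn k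
end

section
/- For every n ≥ 1, every integer k with 0 ≤ k ≤ n − 1, every real number t ≠ 0, and every real number x, the evaluations satisfy Q_{n,k}(x, t) = (−t)^{n−k−1} · Q_{n,k}(−(x + n + n·t)/t, 1/t). -/
open MvPolynomial

/-- Real evaluation of `ChapotonQk`. -/
noncomputable def Fk (n : ℕ) (k : ℤ) (x t : ℝ) : ℝ := aeval ![x, t] (ChapotonQk n k)

lemma Fk_one (k : ℤ) (x t : ℝ) : Fk 1 k x t = if k = 0 then 1 else 0 := by
  unfold Fk ChapotonQk; split_ifs <;> simp

lemma Fk_rec (n : ℕ) (k : ℤ) (x t : ℝ) :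
    Fk (n+2) k x t = (x + ((n:ℝ)+1) + t * ((n:ℝ)+1+(k:ℝ))) * Fk (n+1) k x t
      + ((n:ℝ)+(k:ℝ)) * Fk (n+1) (k-1) x t := by
  simp [Fk, ChapotonQk]

/-- The dual recursion:
`Q_{n+1,k}(x,t) = (x+1+t-k) Q_{n,k}(x+1+t,t) + (n+k-1) Q_{n,k-1}(x+1+t,t)`. -/
lemma Fk_dual_rec (m : ℕ) (k : ℤ) (x t : ℝ) :
    Fk (m+2) k x t = (x + 1 + t - (k:ℝ)) * Fk (m+1) k (x+1+t) t
      + ((m:ℝ)+(k:ℝ)) * Fk (m+1) (k-1) (x+1+t) t := by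
  induction m generalizing k x with
  | zero =>
    rw [Fk_rec]
    rcases eq_or_ne k 0 with rfl | h0
    · simp [Fk_one]
    rcases eq_or_ne k 1 with rfl | h1
    · simp [Fk_one]
    · have h1' : k - 1 ≠ 0 := by omega
      simp [Fk_one, h0, h1']
  | succ m ih =>
    rw [Fk_rec, ih k x, ih (k-1) x, Fk_rec, Fk_rec]
    push_cast
    ring

lemma Fk_dual (m : ℕ) (k : ℤ) (x t : ℝ) (ht : t ≠ 0) :
    Fk (m+1) k x t =
      (-t) ^ ((m:ℤ) - k) * Fk (m+1) k (-(x + ((m:ℝ)+1) + ((m:ℝ)+1) * t)/t) (1/t) := by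
  have hnt : (-t) ≠ 0 := neg_ne_zero.2 ht
  induction m generalizing k x with
  | zero =>
    rcases eq_or_ne k 0 with rfl | h0
    · simp [Fk_one]
    · simp [Fk_one, h0]
  | succ m ih =>
    rw [Fk_dual_rec, ih k (x+1+t), ih (k-1) (x+1+t), Fk_rec]
    push_cast
    have hx : -(x + 1 + t + ((m:ℝ) + 1) + ((m:ℝ) + 1) * t) / t
        = -(x + ((m:ℝ) + 1 + 1) + ((m:ℝ) + 1 + 1) * t) / t := by ring
    have e1 : (m:ℤ) - (k - 1) = ((m:ℤ) - k) + 1 := by ring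
    have e2 : (m:ℤ) + 1 - k = ((m:ℤ) - k) + 1 := by ring
    rw [hx, e1, e2, zpow_add_one₀ hnt]
    set A := Fk (m+1) k (-(x + ((m:ℝ) + 1 + 1) + ((m:ℝ) + 1 + 1) * t) / t) (1/t)
    set B := Fk (m+1) (k-1) (-(x + ((m:ℝ) + 1 + 1) + ((m:ℝ) + 1 + 1) * t) / t) (1/t)
    set c := (-t) ^ ((m:ℤ) - k)
    field_simp
    ring

/-- For real `t ≠ 0` and real `x`,
`Q_{n,k}(x,t) = (-t)^(n-k-1) Q_{n,k}(-(x+n+nt)/t, 1/t)`. -/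
theorem chapotonQk_real_duality (n : ℕ) (hn : 1 ≤ n) (k : ℤ) (hk0 : 0 ≤ k)
    (hkn : k ≤ (n : ℤ) - 1) (x t : ℝ) (ht : t ≠ 0) :
    aeval ![x, t] (ChapotonQk n k) =
      (-t) ^ ((n : ℤ) - k - 1) *
        aeval ![-(x + n + n * t) / t, 1 / t] (ChapotonQk n k) := by
  obtain ⟨m, rfl⟩ : ∃ m, n = m + 1 := ⟨n - 1, by omega⟩
  have h1 : ((m + 1 : ℕ) : ℤ) - k - 1 = (m : ℤ) - k := by push_cast; ring
  have h2 : ((m + 1 : ℕ) : ℝ) = (m : ℝ) + 1 := by push_cast; ring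
  rw [h1, h2]
  exact Fk_dual m k x t ht
end

section
/- For every n ≥ 1, the identity Q_{n+1}(x, y, z, t) − Q_{n+1}(x − z − t, y, z, t) = (z + t)·(n·Q_n + y·∂_y Q_n) holds, where Q_{n+1}(x − z − t, y, z, t) denotes the polynomial obtained from Q_{n+1} by substituting x − z − t for x, and Q_n = Q_n(x, y, z, t). -/
open MvPolynomial

noncomputable def phiv : Fin 4 → MvPolynomial (Fin 4) ℤ := ![X 0 - X 2 - X 3, X 1, X 2, X 3]

lemma pderiv1_aeval (p : MvPolynomial (Fin 4) ℤ) :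
    pderiv 1 (aeval phiv p) = aeval phiv (pderiv 1 p) := by
  induction p using MvPolynomial.induction_on with
  | C a => simp
  | add p q hp hq => simp only [map_add, hp, hq]
  | mul_X p i hp =>
    rw [map_mul, aeval_X, pderiv_mul, pderiv_mul, pderiv_X, hp, map_add, map_mul, aeval_X,
      map_mul]
    congr 1
    fin_cases i <;> simp [phiv, Pi.single_apply]

lemma pderiv1_natCast (m : ℕ) : pderiv 1 ((m : MvPolynomial (Fin 4) ℤ)) = 0 := by
  rw [← map_natCast (C : ℤ →+* MvPolynomial (Fin 4) ℤ)]; simp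

/-- `Q_{n+1}(x,y,z,t) - Q_{n+1}(x-z-t,y,z,t) = (z+t)(n + y ∂_y) Q_n`. -/
theorem chapotonQ_diff (n : ℕ) (hn : 1 ≤ n) :
    ChapotonQ (n + 1) - aeval ![X 0 - X 2 - X 3, X 1, X 2, X 3] (ChapotonQ (n + 1)) =
      (X 2 + X 3) * ((n : MvPolynomial (Fin 4) ℤ) * ChapotonQ n +
        X 1 * pderiv 1 (ChapotonQ n)) := by
  have hv : (![X 0 - X 2 - X 3, X 1, X 2, X 3] : Fin 4 → MvPolynomial (Fin 4) ℤ) = phiv := rfl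
  rw [hv]
  induction n, hn using Nat.le_induction with
  | base =>
    show ChapotonQ 2 - _ = _
    simp only [ChapotonQ, Nat.cast_zero, map_add, map_mul, map_one, aeval_X, pderiv_one,
      mul_zero, add_zero, map_zero, phiv]
    simp [phiv]
    ring
  | succ n hn ih =>
    obtain ⟨m, rfl⟩ : ∃ m, n = m + 1 := ⟨n - 1, (Nat.succ_pred_eq_of_pos hn).symm⟩
    set A := ChapotonQ (m + 1) with hA
    set B := pderiv 1 A with hB
    set CC := pderiv 1 B with hCC
    have hQ2 : ChapotonQ (m + 2) =
        (X 0 + ((m : MvPolynomial (Fin 4) ℤ) + 1) * X 2) * A +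
          (X 1 + X 3) * (((m : MvPolynomial (Fin 4) ℤ) + 1) * A + X 1 * B) := rfl
    have hQ3 : ChapotonQ (m + 3) =
        (X 0 + ((m : MvPolynomial (Fin 4) ℤ) + 1 + 1) * X 2) * ChapotonQ (m + 2) +
          (X 1 + X 3) * (((m : MvPolynomial (Fin 4) ℤ) + 1 + 1) * ChapotonQ (m + 2) +
            X 1 * pderiv 1 (ChapotonQ (m + 2))) := by
      show ChapotonQ (m + 1 + 2) = _
      rw [ChapotonQ]
      push_cast
      ring_nf
    -- derivative of Q(m+2)
    have hD2 : pderiv 1 (ChapotonQ (m + 2)) =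
        (X 0 + ((m : MvPolynomial (Fin 4) ℤ) + 1) * X 2) * B +
          (((m : MvPolynomial (Fin 4) ℤ) + 1) * A + X 1 * B) +
          (X 1 + X 3) * (((m : MvPolynomial (Fin 4) ℤ) + 1) * B + (B + X 1 * CC)) := by
      rw [hQ2]
      simp only [pderiv_mul, map_add, pderiv_X, pderiv1_natCast, ← hB, ← hCC, pderiv_mul]
      simp [Pi.single_apply]
      ring
    -- φ of Q(m+2) via IH
    have hphiQ2 : aeval phiv (ChapotonQ (m + 2)) =
        ChapotonQ (m + 2) - (X 2 + X 3) * (((m : MvPolynomial (Fin 4) ℤ) + 1) * A + X 1 * B) := by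
      have := ih
      push_cast at this ⊢
      linear_combination -this
    have hphiD2 : aeval phiv (pderiv 1 (ChapotonQ (m + 2))) =
        pderiv 1 (ChapotonQ (m + 2)) -
          (X 2 + X 3) * (((m : MvPolynomial (Fin 4) ℤ) + 1) * B + (B + X 1 * CC)) := by
      rw [← pderiv1_aeval, hphiQ2, map_sub, hQ2]
      simp only [pderiv_mul, map_add, pderiv_X, pderiv1_natCast, ← hB, ← hCC]
      simp [Pi.single_apply]
      try ring
    have h0 : phiv 0 = X 0 - X 2 - X 3 := rfl
    have h1 : phiv 1 = X 1 := rfl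
    have h2 : phiv 2 = X 2 := rfl
    have h3 : phiv 3 = X 3 := rfl
    have hphiQ3 : aeval phiv (ChapotonQ (m + 3)) =
        ((X 0 - X 2 - X 3) + ((m : MvPolynomial (Fin 4) ℤ) + 1 + 1) * X 2) *
            aeval phiv (ChapotonQ (m + 2)) +
          (X 1 + X 3) * (((m : MvPolynomial (Fin 4) ℤ) + 1 + 1) * aeval phiv (ChapotonQ (m + 2)) +
            X 1 * aeval phiv (pderiv 1 (ChapotonQ (m + 2)))) := by
      rw [hQ3]
      simp only [map_add, map_mul, map_natCast, map_one, aeval_X, h0, h1, h2, h3]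
    rw [show m + 1 + 1 = m + 2 from rfl, show m + 2 + 1 = m + 3 from rfl]
    rw [hphiQ3, hphiQ2, hphiD2, hQ3, hD2, hQ2]
    push_cast
    ring
end

section
/- Let w be the formal power series w = ∑_{n≥1} n^{n−1}·y^n/n! with rational coefficients. Then w satisfies Lambert's functional equation w·exp(−w) = y in the ring of formal power series in y over the rationals (exp(−w) is well defined since w has zero constant term). -/
/-- Lambert's series `w = ∑_{n ≥ 1} n^(n-1) yⁿ/n!` as a formal power series over `ℚ`. -/
noncomputable def lambertW : PowerSeries ℚ :=
  PowerSeries.mk fun n => if n = 0 then 0 else (n : ℚ) ^ (n - 1) / n.factorial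

/-- The formal exponential `exp f = ∑_{k ≥ 0} f^k/k!` of a formal power series `f`
with zero constant term: since `f^k` has order at least `k`, the coefficient of `yⁿ`
only involves the terms with `k ≤ n`. -/
noncomputable def expOf (f : PowerSeries ℚ) : PowerSeries ℚ :=
  PowerSeries.mk fun n =>
    ∑ k ∈ Finset.range (n + 1), PowerSeries.coeff n (f ^ k) / k.factorial

/-! Put `E = exp(-w)`. From `E' = -w' E`, the series `F = w E` satisfies `y F' = y w' (1 - w) E`,
so the differential equation `y w' (1 - w) = w` gives `y F' = F`, which forces `F = F₁ y`, and
`F₁ = 1`. Writing `w = y U` with `U = ∑ (k+1)^(k-1) yᵏ/k!` and `T = ∑ nⁿ yⁿ/n! = 1 + y w'`, the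
differential equation amounts to `U T = w'`, which coefficientwise is Abel's identity
`∑ₖ C(n,k) (k+1)^(k-1) (n-k)^(n-k) = (n+1)ⁿ`. That identity is the value at `x = 1` of
`∑ₖ C(n,k) Aₖ(x) (n-k)^(n-k) = (x+n)ⁿ` for the Abel polynomials `Aₖ₊₁(x) = x (x+k+1)ᵏ`, which
follows by induction on `n` from `A'ₖ₊₁(x) = (k+1) Aₖ(x+1)`. -/

open Finset Nat

namespace Polynomial

variable {R : Type*}

theorem eq_of_derivative_eq_of_eval_zero_eq [Semiring R] [IsAddTorsionFree R] {p q : R[X]}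
    (hD : derivative p = derivative q) (h0 : p.eval 0 = q.eval 0) : p = q := by
  ext (_ | n)
  · simpa [coeff_zero_eq_eval_zero] using h0
  · have h := congr_arg (coeff · n) hD
    simp only [coeff_derivative, ← Nat.cast_add_one, ← nsmul_eq_mul'] at h
    exact IsAddTorsionFree.nsmul_right_injective n.succ_ne_zero h

variable [CommSemiring R]

noncomputable def abelPoly : ℕ → R[X]
  | 0 => 1
  | k + 1 => X * (X + ((k + 1 : ℕ) : R[X])) ^ k

@[simp] theorem abelPoly_zero : (abelPoly 0 : R[X]) = 1 := rfl

theorem derivative_abelPoly_succ (k : ℕ) :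
    derivative (abelPoly (k + 1) : R[X]) = (k + 1 : R[X]) * (abelPoly k).comp (X + 1) := by
  rcases k with _ | k
  · simp [abelPoly]
  · simp only [abelPoly, derivative_mul, derivative_X, derivative_pow, derivative_add,
      derivative_natCast, C_eq_natCast, mul_comp, X_comp, pow_comp, add_comp, natCast_comp]
    push_cast
    ring

noncomputable def abelSum (n : ℕ) : R[X] :=
  ∑ k ∈ range (n + 1), (n.choose k : R[X]) * abelPoly k * ((n - k : ℕ) : R[X]) ^ (n - k)

theorem derivative_abelSum_succ (n : ℕ) :
    derivative (abelSum (n + 1) : R[X]) = (n + 1 : R[X]) * (abelSum n).comp (X + 1) := by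
  rw [abelSum, abelSum, sum_range_succ', sum_comp, mul_sum, derivative_add, derivative_sum]
  simp only [derivative_mul, derivative_natCast, derivative_pow,
    derivative_abelPoly_succ, mul_comp, natCast_comp, pow_comp, abelPoly_zero, derivative_one]
  simp only [zero_mul, mul_zero, add_zero, zero_add, Nat.add_sub_add_right]
  refine sum_congr rfl fun k _ => ?_
  have h := congr_arg (Nat.cast : ℕ → R[X]) (Nat.add_one_mul_choose_eq n k)
  push_cast at h
  rw [← mul_assoc, ← h]
  ring

theorem eval_one_abelPoly (k : ℕ) : (abelPoly k : R[X]).eval 1 = (k + 1 : R) ^ (k - 1) := by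
  rcases k with _ | k
  · simp
  · simp only [abelPoly, eval_mul, eval_X, eval_pow, eval_add, eval_natCast]
    push_cast
    ring

theorem abelSum_eq [IsAddTorsionFree R] (n : ℕ) : (abelSum n : R[X]) = (X + (n : R[X])) ^ n := by
  induction n with
  | zero => simp [abelSum]
  | succ n ih =>
    apply eq_of_derivative_eq_of_eval_zero_eq
    · rw [derivative_abelSum_succ, ih]
      simp only [derivative_pow, derivative_add, derivative_X, derivative_natCast, pow_comp,
        add_comp, X_comp, natCast_comp, C_eq_natCast]
      push_cast
      ring
    · simp [abelSum, eval_finsetSum, sum_range_succ', abelPoly]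

end Polynomial

open Polynomial in
theorem abel_identity (n : ℕ) :
    ∑ k ∈ range (n + 1), n.choose k * (k + 1) ^ (k - 1) * (n - k) ^ (n - k) = (n + 1) ^ n := by
  simpa [abelSum, eval_finsetSum, eval_one_abelPoly, add_comm]
    using congr_arg (eval 1) (abelSum_eq (R := ℕ) n)

open PowerSeries

namespace PowerSeries

variable {R : Type*}

theorem eq_C_coeff_one_mul_X_of_X_mul_derivative_eq [CommRing R] [IsAddTorsionFree R]
    {f : R⟦X⟧} (h : X * d⁄dX R f = f) : f = C (coeff 1 f) * X := by
  ext (_ | _ | n)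
  · simpa using (congr_arg constantCoeff h).symm
  · simp
  · have hn := congr_arg (coeff (n + 2)) h
    rw [coeff_succ_X_mul, coeff_derivative] at hn
    rw [coeff_C_mul, coeff_X, if_neg (by omega), mul_zero]
    have hc : (n + 1) • coeff (n + 2) f = 0 := by
      rw [nsmul_eq_mul']
      push_cast at hn ⊢
      linear_combination hn
    exact IsAddTorsionFree.nsmul_right_injective n.succ_ne_zero (hc.trans (smul_zero _).symm)

theorem coeff_mk_div_factorial_mul_mk_div_factorial [Field R] [CharZero R] (a b : ℕ → R)
    (n : ℕ) :
    coeff n (mk (fun i => a i / i !) * mk (fun j => b j / j !)) =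
      (∑ k ∈ range (n + 1), n.choose k * a k * b (n - k)) / n ! := by
  rw [coeff_mul, Nat.sum_antidiagonal_eq_sum_range_succ_mk, sum_div]
  refine sum_congr rfl fun k hk => ?_
  rw [coeff_mk, coeff_mk, Nat.cast_choose R (Nat.lt_succ_iff.mp (mem_range.mp hk))]
  have := Nat.cast_ne_zero (R := R).mpr n.factorial_ne_zero
  field_simp

end PowerSeries

theorem expOf_eq_subst_exp {f : ℚ⟦X⟧} (hf : constantCoeff f = 0) :
    expOf f = (exp ℚ).subst f := by
  ext n
  rw [expOf, coeff_mk, coeff_subst' (HasSubst.of_constantCoeff_zero' hf),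
    finsum_eq_sum_of_support_subset _ (s := range (n + 1)) ?_]
  · simp [div_eq_inv_mul]
  · intro d hd
    refine mem_range.mpr (Nat.lt_succ_of_le (not_lt.mp fun hnd => hd ?_))
    simp [coeff_of_lt_order n ((Nat.cast_lt.mpr hnd).trans_le
      (le_order_pow_of_constantCoeff_eq_zero d hf))]

theorem derivative_expOf {f : ℚ⟦X⟧} (hf : constantCoeff f = 0) :
    d⁄dX ℚ (expOf f) = expOf f * d⁄dX ℚ f := by
  rw [expOf_eq_subst_exp hf, derivative_subst (HasSubst.of_constantCoeff_zero' hf), derivative_exp]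

theorem constantCoeff_expOf (f : ℚ⟦X⟧) : constantCoeff (expOf f) = 1 := by
  rw [← coeff_zero_eq_constantCoeff_apply, expOf, coeff_mk]
  simp

theorem lambertW_eq_X_mul : lambertW = X * mk fun k => ((k : ℚ) + 1) ^ (k - 1) / k ! := by
  ext (_ | n)
  · simp [lambertW]
  · rw [coeff_succ_X_mul, lambertW, coeff_mk, coeff_mk, if_neg n.succ_ne_zero, factorial_succ]
    rcases n with _ | n
    · simp
    · push_cast
      field_simp
      ring

theorem derivative_lambertW : d⁄dX ℚ lambertW = mk fun n => ((n : ℚ) + 1) ^ n / n ! := by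
  ext n
  rw [coeff_derivative, lambertW, coeff_mk, coeff_mk, if_neg n.succ_ne_zero, factorial_succ]
  push_cast
  field_simp

theorem one_add_X_mul_derivative_lambertW :
    1 + X * d⁄dX ℚ lambertW = mk fun n => (n : ℚ) ^ n / n ! := by
  ext (_ | n)
  · simp
  · rw [map_add, coeff_succ_X_mul, derivative_lambertW, coeff_mk, coeff_mk, coeff_one,
      if_neg n.succ_ne_zero, factorial_succ]
    push_cast
    field_simp
    ring

theorem mk_mul_mk_eq_derivative_lambertW :
    ((mk fun k => ((k : ℚ) + 1) ^ (k - 1) / k !) * mk fun n => (n : ℚ) ^ n / n !) =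
      d⁄dX ℚ lambertW := by
  ext n
  rw [coeff_mk_div_factorial_mul_mk_div_factorial, derivative_lambertW, coeff_mk]
  congr 1
  exact_mod_cast abel_identity n

theorem X_mul_derivative_lambertW_mul_one_sub :
    X * d⁄dX ℚ lambertW * (1 - lambertW) = lambertW := by
  have hT := one_add_X_mul_derivative_lambertW
  rw [← mk_mul_mk_eq_derivative_lambertW] at hT ⊢
  rw [lambertW_eq_X_mul]
  linear_combination -(X * mk fun k => ((k : ℚ) + 1) ^ (k - 1) / k !) * hT

/-- Lambert'"'"'s functional equation: `w exp(-w) = y`. -/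
theorem lambertW_functional_equation :
    lambertW * expOf (-lambertW) = PowerSeries.X := by
  have hw : constantCoeff lambertW = 0 := by simp [lambertW_eq_X_mul]
  set E := expOf (-lambertW)
  have hE : d⁄dX ℚ E = -(E * d⁄dX ℚ lambertW) := by
    rw [derivative_expOf (by simp [hw]), map_neg, mul_neg]
  have hode : X * d⁄dX ℚ (lambertW * E) = lambertW * E := by
    rw [Derivation.leibniz, hE, smul_eq_mul, smul_eq_mul]
    linear_combination E * X_mul_derivative_lambertW_mul_one_sub
  rw [eq_C_coeff_one_mul_X_of_X_mul_derivative_eq hode]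
  simp [lambertW_eq_X_mul, mul_assoc, E, constantCoeff_expOf]
end
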